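/- With X_h denoting, for a function h : ℝ⁴ → ℝ, the vector field with components (X_h)₀ = −x₁·∂₁h − x₃·∂₃h, (X_h)₁ = x₁·∂₀h − x₃·∂₂h, (X_h)₂ = x₃·∂₁h − x₁·∂₃h, (X_h)₃ = x₃·∂₀h + x₁·∂₂h: (a) the constant coordinate vector fields ∂₀ and ∂₂ are Poisson vector fields, i.e. ∂₀{f,g} = {∂₀f,g} + {f,∂₀g} and ∂₂{f,g} = {∂₂f,g} + {f,∂₂g} for all smooth f,g : ℝ⁴ → ℝ; (b) there is no differentiable h : ℝ⁴ → ℝ with X_h = ∂₀ (i.e. components (1,0,0,0)) everywhere, and no differentiable h with X_h = ∂₂ (i.e. components (0,0,1,0)) everywhere. -/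

import Mathlib

/-- Partial derivative of `f : ℝ⁴ → ℝ` in the `i`-th coordinate direction. -/
noncomputable def pd (i : Fin 4) (f : (Fin 4 → ℝ) → ℝ) (x : Fin 4 → ℝ) : ℝ :=
  fderiv ℝ f x (Pi.single i 1)

/-- The near-positive Poisson bracket on ℝ⁴. -/
noncomputable def nearPosBracket (f g : (Fin 4 → ℝ) → ℝ) : (Fin 4 → ℝ) → ℝ :=
  fun x =>
    x 1 * (pd 0 f x * pd 1 g x - pd 1 f x * pd 0 g x
      + pd 2 f x * pd 3 g x - pd 3 f x * pd 2 g x)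
    + x 3 * (pd 0 f x * pd 3 g x - pd 3 f x * pd 0 g x
      + pd 1 f x * pd 2 g x - pd 2 f x * pd 1 g x)



lemma pd_add {f g : (Fin 4 → ℝ) → ℝ} {x} (i : Fin 4)
    (hf : DifferentiableAt ℝ f x) (hg : DifferentiableAt ℝ g x) :
    pd i (fun y => f y + g y) x = pd i f x + pd i g x := by
  unfold pd; rw [fderiv_fun_add hf hg]; simp

lemma pd_sub {f g : (Fin 4 → ℝ) → ℝ} {x} (i : Fin 4)
    (hf : DifferentiableAt ℝ f x) (hg : DifferentiableAt ℝ g x) :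
    pd i (fun y => f y - g y) x = pd i f x - pd i g x := by
  unfold pd; rw [fderiv_fun_sub hf hg]; simp

lemma pd_mul {f g : (Fin 4 → ℝ) → ℝ} {x} (i : Fin 4)
    (hf : DifferentiableAt ℝ f x) (hg : DifferentiableAt ℝ g x) :
    pd i (fun y => f y * g y) x = pd i f x * g x + f x * pd i g x := by
  unfold pd; rw [fderiv_fun_mul hf hg]; simp; ring

lemma pd_coord (i j : Fin 4) (x : Fin 4 → ℝ) :
    pd i (fun y => y j) x = (Pi.single i 1 : Fin 4 → ℝ) j := by
  unfold pd
  rw [show (fun y : Fin 4 → ℝ => y j) = (ContinuousLinearMap.proj j : (Fin 4 → ℝ) →L[ℝ] ℝ) from rfl,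
    ContinuousLinearMap.fderiv]
  rfl

lemma contDiff_pd (i : Fin 4) {f : (Fin 4 → ℝ) → ℝ} (hf : ContDiff ℝ (⊤ : ℕ∞) f) :
    ContDiff ℝ (⊤ : ℕ∞) (fun y => pd i f y) := by
  have h1 : ContDiff ℝ (⊤ : ℕ∞) (fderiv ℝ f) := hf.fderiv_right (by simp)
  exact h1.clm_apply contDiff_const

lemma pd_comm {f : (Fin 4 → ℝ) → ℝ} (hf : ContDiff ℝ (⊤ : ℕ∞) f) (i j : Fin 4) (x : Fin 4 → ℝ) :
    pd i (fun y => pd j f y) x = pd j (fun y => pd i f y) x := by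
  have hdf : Differentiable ℝ f := hf.differentiable (by simp)
  have hdf' : Differentiable ℝ (fderiv ℝ f) := (hf.fderiv_right (m := ((⊤ : ℕ∞) : WithTop ℕ∞)) (by simp)).differentiable (by simp)
  have hsym := second_derivative_symmetric (f' := fderiv ℝ f)
    (fun y => (hdf y).hasFDerivAt) ((hdf' x).hasFDerivAt)
  have key : ∀ a b : Fin 4, pd a (fun y => pd b f y) x
      = fderiv ℝ (fderiv ℝ f) x (Pi.single a 1) (Pi.single b 1) := by
    intro a b
    unfold pd
    rw [fderiv_clm_apply (hdf' x) (differentiableAt_const _)]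
    simp
  rw [key i j, key j i]
  exact hsym _ _


lemma poisson_vf (k : Fin 4) (h1 : (Pi.single k 1 : Fin 4 → ℝ) 1 = 0)
    (h3 : (Pi.single k 1 : Fin 4 → ℝ) 3 = 0)
    {f g : (Fin 4 → ℝ) → ℝ} (hf : ContDiff ℝ (⊤ : ℕ∞) f) (hg : ContDiff ℝ (⊤ : ℕ∞) g)
    (x : Fin 4 → ℝ) :
    pd k (nearPosBracket f g) x
      = nearPosBracket (fun y => pd k f y) g x + nearPosBracket f (fun y => pd k g y) x := by
  have Df : ∀ i : Fin 4, Differentiable ℝ (fun y => pd i f y) :=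
    fun i => (contDiff_pd i hf).differentiable (by simp)
  have Dg : ∀ i : Fin 4, Differentiable ℝ (fun y => pd i g y) :=
    fun i => (contDiff_pd i hg).differentiable (by simp)
  have hcoord : ∀ j : Fin 4, Differentiable ℝ (fun y : Fin 4 → ℝ => y j) :=
    fun j => (ContinuousLinearMap.proj j : (Fin 4 → ℝ) →L[ℝ] ℝ).differentiable
  have key : ∀ i j : Fin 4, pd k (fun y => pd i f y * pd j g y) x
      = pd i (fun y => pd k f y) x * pd j g x + pd i f x * pd j (fun y => pd k g y) x := by
    intro i j
    calc pd k (fun y => pd i f y * pd j g y) x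
        = pd k (fun y => pd i f y) x * pd j g x + pd i f x * pd k (fun y => pd j g y) x :=
          pd_mul k (Df i x) (Dg j x)
      _ = pd i (fun y => pd k f y) x * pd j g x + pd i f x * pd j (fun y => pd k g y) x := by
          rw [pd_comm hf k i x, pd_comm hg k j x]
  have DP : Differentiable ℝ (fun y => pd 0 f y * pd 1 g y - pd 1 f y * pd 0 g y
      + pd 2 f y * pd 3 g y - pd 3 f y * pd 2 g y) :=
    ((((Df 0).mul (Dg 1)).sub ((Df 1).mul (Dg 0))).add ((Df 2).mul (Dg 3))).sub
      ((Df 3).mul (Dg 2))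
  have DQ : Differentiable ℝ (fun y => pd 0 f y * pd 3 g y - pd 3 f y * pd 0 g y
      + pd 1 f y * pd 2 g y - pd 2 f y * pd 1 g y) :=
    ((((Df 0).mul (Dg 3)).sub ((Df 3).mul (Dg 0))).add ((Df 1).mul (Dg 2))).sub
      ((Df 2).mul (Dg 1))
  have hP : pd k (fun y => pd 0 f y * pd 1 g y - pd 1 f y * pd 0 g y
      + pd 2 f y * pd 3 g y - pd 3 f y * pd 2 g y) x
      = pd k (fun y => pd 0 f y * pd 1 g y) x - pd k (fun y => pd 1 f y * pd 0 g y) x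
        + pd k (fun y => pd 2 f y * pd 3 g y) x - pd k (fun y => pd 3 f y * pd 2 g y) x := by
    rw [pd_sub k ((((Df 0).fun_mul (Dg 1)).fun_sub ((Df 1).fun_mul (Dg 0))).fun_add ((Df 2).fun_mul (Dg 3)) x)
        ((Df 3).fun_mul (Dg 2) x),
      pd_add k (((Df 0).fun_mul (Dg 1)).fun_sub ((Df 1).fun_mul (Dg 0)) x) ((Df 2).fun_mul (Dg 3) x),
      pd_sub k ((Df 0).fun_mul (Dg 1) x) ((Df 1).fun_mul (Dg 0) x)]
  have hQ : pd k (fun y => pd 0 f y * pd 3 g y - pd 3 f y * pd 0 g y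
      + pd 1 f y * pd 2 g y - pd 2 f y * pd 1 g y) x
      = pd k (fun y => pd 0 f y * pd 3 g y) x - pd k (fun y => pd 3 f y * pd 0 g y) x
        + pd k (fun y => pd 1 f y * pd 2 g y) x - pd k (fun y => pd 2 f y * pd 1 g y) x := by
    rw [pd_sub k ((((Df 0).fun_mul (Dg 3)).fun_sub ((Df 3).fun_mul (Dg 0))).fun_add ((Df 1).fun_mul (Dg 2)) x)
        ((Df 2).fun_mul (Dg 1) x),
      pd_add k (((Df 0).fun_mul (Dg 3)).fun_sub ((Df 3).fun_mul (Dg 0)) x) ((Df 1).fun_mul (Dg 2) x),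
      pd_sub k ((Df 0).fun_mul (Dg 3) x) ((Df 3).fun_mul (Dg 0) x)]
  have main : pd k (nearPosBracket f g) x
      = (pd k (fun y : Fin 4 → ℝ => y 1) x
          * (pd 0 f x * pd 1 g x - pd 1 f x * pd 0 g x
            + pd 2 f x * pd 3 g x - pd 3 f x * pd 2 g x)
        + x 1 * pd k (fun y => pd 0 f y * pd 1 g y - pd 1 f y * pd 0 g y
            + pd 2 f y * pd 3 g y - pd 3 f y * pd 2 g y) x)
      + (pd k (fun y : Fin 4 → ℝ => y 3) x
          * (pd 0 f x * pd 3 g x - pd 3 f x * pd 0 g x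
            + pd 1 f x * pd 2 g x - pd 2 f x * pd 1 g x)
        + x 3 * pd k (fun y => pd 0 f y * pd 3 g y - pd 3 f y * pd 0 g y
            + pd 1 f y * pd 2 g y - pd 2 f y * pd 1 g y) x) := by
    have step := pd_add k ((hcoord 1).mul DP x) ((hcoord 3).mul DQ x)
    have m1 := pd_mul k (hcoord 1 x) (DP x)
    have m2 := pd_mul k (hcoord 3 x) (DQ x)
    calc pd k (nearPosBracket f g) x
        = pd k (fun y => y 1 * (pd 0 f y * pd 1 g y - pd 1 f y * pd 0 g y
            + pd 2 f y * pd 3 g y - pd 3 f y * pd 2 g y)) x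
          + pd k (fun y => y 3 * (pd 0 f y * pd 3 g y - pd 3 f y * pd 0 g y
            + pd 1 f y * pd 2 g y - pd 2 f y * pd 1 g y)) x := step
      _ = _ := by rw [m1, m2]
  rw [main, pd_coord, pd_coord, h1, h3, hP, hQ,
    key 0 1, key 1 0, key 2 3, key 3 2, key 0 3, key 3 0, key 1 2, key 2 1]
  simp only [nearPosBracket]
  ring

/-- (a) `∂₀` and `∂₂` are Poisson vector fields for the near-positive bracket, and
(b) neither `∂₀` nor `∂₂` is a Hamiltonian vector field; hence both classes are
nontrivial in the first Poisson cohomology of the local model. -/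
theorem nearPos_d0_d2_poisson_not_hamiltonian :
    ((∀ f g : (Fin 4 → ℝ) → ℝ, ContDiff ℝ (⊤ : ℕ∞) f → ContDiff ℝ (⊤ : ℕ∞) g →
      ∀ x : Fin 4 → ℝ,
        pd 0 (nearPosBracket f g) x
          = nearPosBracket (fun y => pd 0 f y) g x
            + nearPosBracket f (fun y => pd 0 g y) x) ∧
     (∀ f g : (Fin 4 → ℝ) → ℝ, ContDiff ℝ (⊤ : ℕ∞) f → ContDiff ℝ (⊤ : ℕ∞) g →
      ∀ x : Fin 4 → ℝ,
        pd 2 (nearPosBracket f g) x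
          = nearPosBracket (fun y => pd 2 f y) g x
            + nearPosBracket f (fun y => pd 2 g y) x)) ∧
    ((¬ ∃ h : (Fin 4 → ℝ) → ℝ, Differentiable ℝ h ∧ ∀ x : Fin 4 → ℝ,
        -(x 1) * pd 1 h x - x 3 * pd 3 h x = 1
        ∧ x 1 * pd 0 h x - x 3 * pd 2 h x = 0
        ∧ x 3 * pd 1 h x - x 1 * pd 3 h x = 0
        ∧ x 3 * pd 0 h x + x 1 * pd 2 h x = 0) ∧
     (¬ ∃ h : (Fin 4 → ℝ) → ℝ, Differentiable ℝ h ∧ ∀ x : Fin 4 → ℝ,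
        -(x 1) * pd 1 h x - x 3 * pd 3 h x = 0
        ∧ x 1 * pd 0 h x - x 3 * pd 2 h x = 0
        ∧ x 3 * pd 1 h x - x 1 * pd 3 h x = 1
        ∧ x 3 * pd 0 h x + x 1 * pd 2 h x = 0)) := by
  refine ⟨⟨fun f g hf hg x => poisson_vf 0 (by simp [Pi.single_eq_of_ne]) (by simp [Pi.single_eq_of_ne]) hf hg x,
      fun f g hf hg x => poisson_vf 2 (by simp [Pi.single_eq_of_ne]) (by simp [Pi.single_eq_of_ne]) hf hg x⟩, ?_, ?_⟩
  · rintro ⟨h, -, hx⟩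
    have h0 := (hx (fun _ => 0)).1
    norm_num at h0
  · rintro ⟨h, -, hx⟩
    have h0 := (hx (fun _ => 0)).2.2.1
    norm_num at h0
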